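/- arXiv:math/0103232 — 4 statements merged into one kernel-verified Lean document; each statement's English description precedes it below -/
import Mathlib

section
/- Let m be a natural number, and let A and B be disjoint finite sets of natural numbers with A ∪ B = {0, 1, ..., 2m}, |A| = m + 1 and |B| = m. Assume condition (*) holds: i + j ≠ 2m for any two distinct elements i, j of A, and i + j ≠ 2m for any two distinct elements i, j of B. Then the number of even elements of B is congruent to m(m+1)/2 modulo 2. -/
/-!
The numbers `0, …, 2m` split into the `m` pairs `{i, 2m - i}` with `i < m` and the singleton
`{m}`. By (*) no pair lies inside `A`, so `B` meets each pair; as `|B| = m`, it contains exactly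
one element of each pair. Both elements of a pair have the parity of `i`, so `B` has as many
even elements as `{0, …, m - 1}`, namely `⌊(m + 1) / 2⌋ ≡ m(m + 1)/2 (mod 2)`.
-/

open Finset

lemma card_filter_even_range (n : ℕ) : #((range n).filter Even) = (n + 1) / 2 := by
  induction n with
  | zero => simp
  | succ n ih =>
    rw [range_add_one, filter_insert]
    rcases Nat.even_or_odd n with ⟨k, rfl⟩ | ⟨k, rfl⟩
    · rw [if_pos (by simp), card_insert_of_notMem (by simp), ih]
      omega
    · rw [if_neg (by simp), ih]
      omega

lemma succ_div_two_modEq_mul_succ_div_two (m : ℕ) : (m + 1) / 2 ≡ m * (m + 1) / 2 [MOD 2] := by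
  obtain ⟨q, r, hr, rfl⟩ : ∃ q r, r < 4 ∧ m = 4 * q + r := ⟨m / 4, m % 4, by omega, by omega⟩
  have hsq : (4 * q + r) * (4 * q + r + 1) = 16 * (q * q) + (8 * r + 4) * q + r * (r + 1) := by ring
  unfold Nat.ModEq
  interval_cases r <;> omega

def pairRep (m : ℕ) (B : Finset ℕ) (i : ℕ) : ℕ := if i ∈ B then i else 2 * m - i

section pairRep

variable {m : ℕ} {B : Finset ℕ} {i : ℕ}

lemma pairRep_mem (h : i ∈ B ∨ 2 * m - i ∈ B) : pairRep m B i ∈ B := by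
  unfold pairRep
  split_ifs with hi
  exacts [hi, h.resolve_left hi]

lemma pairRep_injOn : Set.InjOn (pairRep m B) (range m) := by
  intro i hi j hj hij
  simp only [coe_range, Set.mem_Iio] at hi hj
  unfold pairRep at hij
  split_ifs at hij <;> omega

lemma even_pairRep_iff (hi : i ≤ 2 * m) : Even (pairRep m B i) ↔ Even i := by
  unfold pairRep
  split_ifs
  · rfl
  · simp [Nat.even_sub hi]

lemma image_pairRep_range (hmeet : ∀ i < m, i ∈ B ∨ 2 * m - i ∈ B) (hB : #B = m) :
    (range m).image (pairRep m B) = B := by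
  refine eq_of_subset_of_card_le (fun b hb => ?_) ?_
  · obtain ⟨i, hi, rfl⟩ := mem_image.mp hb
    exact pairRep_mem (hmeet i (mem_range.mp hi))
  · rw [hB, card_image_of_injOn pairRep_injOn, card_range]

lemma card_filter_even_of_meets_pairs (hmeet : ∀ i < m, i ∈ B ∨ 2 * m - i ∈ B) (hB : #B = m) :
    #(B.filter Even) = (m + 1) / 2 := by
  have hparity : (range m).filter (fun i => Even (pairRep m B i)) = (range m).filter Even :=
    filter_congr fun i hi => even_pairRep_iff (by simp at hi; omega)
  rw [← image_pairRep_range hmeet hB, filter_image, hparity,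
    card_image_of_injOn (pairRep_injOn.mono (coe_subset.mpr (filter_subset _ _))),
    card_filter_even_range]

end pairRep

lemma mem_or_reflect_mem {m : ℕ} {A B : Finset ℕ} (hunion : A ∪ B = range (2 * m + 1))
    (hstarA : ∀ i ∈ A, ∀ j ∈ A, i ≠ j → i + j ≠ 2 * m) {i : ℕ} (hi : i < m) :
    i ∈ B ∨ 2 * m - i ∈ B := by
  have hmem : ∀ j ≤ 2 * m, j ∈ A ∨ j ∈ B := fun j hj => by
    rw [← mem_union, hunion, mem_range]; omega
  rcases hmem i (by omega) with hiA | hiB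
  · rcases hmem (2 * m - i) (by omega) with hjA | hjB
    · exact absurd (by omega) (hstarA i hiA _ hjA (by omega))
    · exact .inr hjB
  · exact .inl hiB

theorem stmt_0_general (m : ℕ) (A B : Finset ℕ)
    (hunion : A ∪ B = Finset.range (2 * m + 1))
    (hB : B.card = m)
    (hstarA : ∀ i ∈ A, ∀ j ∈ A, i ≠ j → i + j ≠ 2 * m) :
    (B.filter (fun b => Even b)).card ≡ m * (m + 1) / 2 [MOD 2] := by
  rw [card_filter_even_of_meets_pairs (fun i => mem_or_reflect_mem hunion hstarA) hB]
  exact succ_div_two_modEq_mul_succ_div_two m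

/-- Lemma 2.7 of the paper: if `A` and `B` are disjoint sets of natural numbers
with `A ∪ B = {0, 1, ..., 2m}`, `|A| = m + 1`, `|B| = m`, and no two distinct
elements of `A` (resp. of `B`) sum to `2m`, then the number of even elements of
`B` is congruent to `m(m+1)/2` modulo `2`. -/
theorem stmt_0 (m : ℕ) (A B : Finset ℕ)
    (hdisj : Disjoint A B)
    (hunion : A ∪ B = Finset.range (2 * m + 1))
    (hA : A.card = m + 1) (hB : B.card = m)
    (hstarA : ∀ i ∈ A, ∀ j ∈ A, i ≠ j → i + j ≠ 2 * m)
    (hstarB : ∀ i ∈ B, ∀ j ∈ B, i ≠ j → i + j ≠ 2 * m) :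
    (B.filter (fun b => Even b)).card ≡ m * (m + 1) / 2 [MOD 2] :=
  stmt_0_general m A B hunion hB hstarA
end

section
/- Let m' ≥ 1 be an integer and set m = 2m'. Let A and B be disjoint finite sets of natural numbers with A ∪ B = {0, 1, ..., 2m − 1} and |A| = |B| = m, satisfying condition (**): i + j ≠ 2m − 1 for any two distinct elements i, j of A, and i + j ≠ 2m − 1 for any two distinct elements i, j of B. Then the integer (number of elements b of B with b ≥ m) − (number of even elements of B) is congruent to m' modulo 2. -/
lemma count_even_range (n : ℕ) : ((Finset.range (2*n)).filter (fun k => Even k)).card = n := by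
  induction n with
  | zero => simp
  | succ k ih =>
    have h : 2*(k+1) = (2*k+1)+1 := by ring
    rw [h, Finset.range_add_one, Finset.filter_insert, Finset.range_add_one, Finset.filter_insert]
    have h1 : ¬ Even (2*k+1) := by simp [Nat.even_add_one]
    have h2 : Even (2*k) := even_two_mul k
    rw [if_neg h1, if_pos h2, Finset.card_insert_of_notMem (by simp), ih]

/-- Lemma 2.10(a) of the paper: for `m = 2m'` with `m' ≥ 1`, if `A` and `B`
are disjoint sets of natural numbers with `A ∪ B = {0, 1, ..., 2m - 1}`,
`|A| = |B| = m`, and no two distinct elements of `A` (resp. of `B`) sum to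
`2m - 1`, then `#{b ∈ B | b ≥ m} - #{b ∈ B | b even} ≡ m' (mod 2)`. -/
theorem stmt_2 (m' : ℕ) (hm' : 1 ≤ m') (A B : Finset ℕ)
    (hdisj : Disjoint A B)
    (hunion : A ∪ B = Finset.range (2 * (2 * m')))
    (hA : A.card = 2 * m') (hB : B.card = 2 * m')
    (hstarA : ∀ i ∈ A, ∀ j ∈ A, i ≠ j → i + j ≠ 2 * (2 * m') - 1)
    (hstarB : ∀ i ∈ B, ∀ j ∈ B, i ≠ j → i + j ≠ 2 * (2 * m') - 1) :
    ((B.filter (fun b => 2 * m' ≤ b)).card : ℤ)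
      - ((B.filter (fun b => Even b)).card : ℤ) ≡ (m' : ℤ) [ZMOD 2] := by
  set m := 2 * m' with hm
  -- every element of B is < 2m
  have hBlt : ∀ b ∈ B, b < 2 * m := by
    intro b hb
    have : b ∈ Finset.range (2 * m) := hunion ▸ Finset.mem_union_right A hb
    simpa using this
  -- the folding map
  set φ : ℕ → ℕ := fun b => if b < m then b else 2 * m - 1 - b with hφ
  have hinj : Set.InjOn φ B := by
    intro b1 hb1 b2 hb2 heq
    by_contra hne
    have h1 := hBlt b1 hb1
    have h2 := hBlt b2 hb2
    simp only [hφ] at heq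
    split_ifs at heq with c1 c2 c2
    · exact hne heq
    · exact hstarB b1 hb1 b2 hb2 hne (by omega)
    · exact hstarB b1 hb1 b2 hb2 hne (by omega)
    · exact hne (by omega)
  have himg : B.image φ = Finset.range m := by
    apply Finset.eq_of_subset_of_card_le
    · intro x hx
      simp only [Finset.mem_image] at hx
      obtain ⟨b, hb, rfl⟩ := hx
      have := hBlt b hb
      simp only [hφ, Finset.mem_range]
      split_ifs <;> omega
    · rw [Finset.card_image_of_injOn hinj, hB]
      simp [hm]
  -- reduce to ZMod 2
  rw [show ((2:ℤ)) = ((2:ℕ):ℤ) by norm_num, ← ZMod.intCast_eq_intCast_iff]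
  push_cast
  have key : ((B.filter (fun b => m ≤ b)).card : ZMod 2)
      + ((B.filter (fun b => Even b)).card : ZMod 2) = (m' : ZMod 2) := by
    rw [Finset.card_filter, Finset.card_filter]
    push_cast
    rw [← Finset.sum_add_distrib]
    have step : ∀ b ∈ B, ((if m ≤ b then (1:ZMod 2) else 0) + (if Even b then 1 else 0))
        = (if Even (φ b) then 1 else 0) := by
      intro b hb
      have hlt := hBlt b hb
      simp only [hφ]
      by_cases hc : b < m
      · rw [if_neg (by omega), if_pos hc, zero_add]
      · rw [if_pos (by omega), if_neg hc]
        have hsub : Even (2 * m - 1 - b) ↔ ¬ Even b := by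
          rw [Nat.even_sub (by omega)]
          have : ¬ Even (2 * m - 1) := by
            rw [Nat.even_sub (by omega)]
            simp [parity_simps]
          tauto
        by_cases he : Even b
        · rw [if_pos he, if_neg (by tauto)]; decide
        · rw [if_neg he, if_pos (hsub.mpr he), add_zero]
    rw [Finset.sum_congr rfl step]
    have himgsum : (∑ k ∈ Finset.range m, if Even k then (1:ZMod 2) else 0)
        = ∑ x ∈ B, if Even (φ x) then (1:ZMod 2) else 0 := by
      rw [← himg, Finset.sum_image (fun x hx y hy h => hinj hx hy h)]
    rw [← himgsum]
    have hcr : (∑ k ∈ Finset.range m, if Even k then (1:ZMod 2) else 0)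
        = (((Finset.range m).filter (fun k => Even k)).card : ZMod 2) := by
      rw [Finset.card_filter]
      push_cast
      simp [apply_ite (Nat.cast : ℕ → ZMod 2)]
    rw [hcr, hm, count_even_range m']
  have : ((B.filter (fun b => m ≤ b)).card : ZMod 2)
      - ((B.filter (fun b => Even b)).card : ZMod 2)
      = ((B.filter (fun b => m ≤ b)).card : ZMod 2)
      + ((B.filter (fun b => Even b)).card : ZMod 2) := CharTwo.sub_eq_add _ _
  rw [hm] at this key ⊢
  rw [this, key]
end

section
/- Let m' ≥ 1 be an integer and set m = 2m'. Let A and B be disjoint finite sets of natural numbers with A ∪ B = {0, 1, ..., 2m − 1} and |A| = |B| = m, satisfying condition (**): i + j ≠ 2m − 1 for any two distinct elements i, j of A, and i + j ≠ 2m − 1 for any two distinct elements i, j of B. Let N be the number of elements b of B with b ≥ m. Then the number of even elements of B is congruent to N + m(m − 1)/2 modulo 2. -/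
/-- Lemma 2.10(b) of the paper: for `m = 2m'` with `m' ≥ 1`, if `A` and `B`
are disjoint sets of natural numbers with `A ∪ B = {0, 1, ..., 2m - 1}`,
`|A| = |B| = m`, and no two distinct elements of `A` (resp. of `B`) sum to
`2m - 1`, then with `N = #{b ∈ B | b ≥ m}` the number of even elements of `B`
is congruent to `N + m(m-1)/2` modulo `2`. -/
theorem stmt_3 (m' : ℕ) (hm' : 1 ≤ m') (A B : Finset ℕ)
    (hdisj : Disjoint A B)
    (hunion : A ∪ B = Finset.range (2 * (2 * m')))
    (hA : A.card = 2 * m') (hB : B.card = 2 * m')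
    (hstarA : ∀ i ∈ A, ∀ j ∈ A, i ≠ j → i + j ≠ 2 * (2 * m') - 1)
    (hstarB : ∀ i ∈ B, ∀ j ∈ B, i ≠ j → i + j ≠ 2 * (2 * m') - 1)
    (N : ℕ) (hN : N = (B.filter (fun b => 2 * m' ≤ b)).card) :
    (B.filter (fun b => Even b)).card
      ≡ N + (2 * m') * (2 * m' - 1) / 2 [MOD 2] := by
  have h2 : (2 : ZMod 2) = 0 := by decide
  have hmem : ∀ b ∈ B, b < 2 * (2 * m') := by
    intro b hb
    have : b ∈ A ∪ B := Finset.mem_union_right A hb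
    rw [hunion, Finset.mem_range] at this
    exact this
  set g : ℕ → ℕ := fun b => if b < 2 * m' then b else 2 * (2 * m') - 1 - b with hg
  have hginj : ∀ x ∈ B, ∀ y ∈ B, g x = g y → x = y := by
    intro x hx y hy hxy
    have hxlt := hmem x hx
    have hylt := hmem y hy
    simp only [g] at hxy
    split_ifs at hxy with h1 h2 h2
    · exact hxy
    · exact absurd (by omega : x + y = 2 * (2 * m') - 1) (hstarB x hx y hy (by omega))
    · exact absurd (by omega : x + y = 2 * (2 * m') - 1) (hstarB x hx y hy (by omega))
    · omega
  have himg : B.image g = Finset.range (2 * m') := by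
    apply Finset.eq_of_subset_of_card_le
    · intro k hk
      obtain ⟨b, hb, rfl⟩ := Finset.mem_image.mp hk
      have := hmem b hb
      simp only [g, Finset.mem_range]
      split_ifs <;> omega
    · rw [Finset.card_range, Finset.card_image_of_injOn
        (fun x hx y hy => hginj x hx y hy), hB]
  have hcast : ∀ b : ℕ, (b : ZMod 2) = if Even b then 0 else 1 := by
    intro b
    have hm : ((b % 2 : ℕ) : ZMod 2) = (b : ZMod 2) := ZMod.natCast_mod b 2
    rw [← hm]
    rcases Nat.even_or_odd b with h | h
    · rw [Nat.even_iff.mp h]; simp [h]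
    · rw [Nat.odd_iff.mp h]; simp [Nat.not_even_iff_odd.mpr h]
  -- parity count: even count equals odd count mod 2, which equals the sum
  have claim1 : ((B.filter (fun b => Even b)).card : ZMod 2) = ∑ b ∈ B, (b : ZMod 2) := by
    have h1 : ∑ b ∈ B, (b : ZMod 2) = ∑ b ∈ B, (if Even b then (0 : ZMod 2) else 1) :=
      Finset.sum_congr rfl (fun b _ => hcast b)
    have h3 : ∑ b ∈ B, (if Even b then (0 : ZMod 2) else 1)
        = ((B.filter (fun b => ¬ Even b)).card : ZMod 2) := by
      rw [← Finset.sum_boole]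
      exact Finset.sum_congr rfl (fun b _ => by by_cases h : Even b <;> simp [h])
    have hoe : (B.filter (fun b => Even b)).card
        + (B.filter (fun b => ¬ Even b)).card = 2 * m' := by
      rw [Finset.card_filter_add_card_filter_not, hB]
    have hoe' : ((B.filter (fun b => Even b)).card : ZMod 2)
        + ((B.filter (fun b => ¬ Even b)).card : ZMod 2) = 0 := by
      rw [← Nat.cast_add, hoe]
      push_cast
      rw [h2]; ring
    rw [h1, h3]
    linear_combination hoe' - ((B.filter (fun b => ¬ Even b)).card : ZMod 2) * h2
  have hkey : ∀ b ∈ B, (b : ZMod 2)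
      = (g b : ZMod 2) + (if 2 * m' ≤ b then 1 else 0) := by
    intro b hb
    by_cases h : 2 * m' ≤ b
    · have hblt := hmem b hb
      have h1 : g b + b = 2 * (2 * m') - 1 := by
        simp only [g]; split_ifs <;> omega
      have hc : ((g b + b : ℕ) : ZMod 2) = ((2 * (2 * m') - 1 : ℕ) : ZMod 2) := by rw [h1]
      have h3 : ((2 * (2 * m') - 1 : ℕ) : ZMod 2) = 1 := by
        rw [hcast]
        have : ¬ Even (2 * (2 * m') - 1) := by rw [Nat.even_iff]; omega
        simp [this]
      rw [h3] at hc
      push_cast at hc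
      rw [if_pos h]
      linear_combination hc - (g b : ZMod 2) * h2
    · simp only [g]
      rw [if_pos (by omega : b < 2 * m'), if_neg h, add_zero]
  rw [← ZMod.natCast_eq_natCast_iff]
  calc ((B.filter (fun b => Even b)).card : ZMod 2)
      = ∑ b ∈ B, (b : ZMod 2) := claim1
    _ = ∑ b ∈ B, ((g b : ZMod 2) + if 2 * m' ≤ b then 1 else 0) :=
        Finset.sum_congr rfl hkey
    _ = (∑ b ∈ B, (g b : ZMod 2))
        + ∑ b ∈ B, (if 2 * m' ≤ b then (1 : ZMod 2) else 0) := Finset.sum_add_distrib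
    _ = (∑ b ∈ B, (g b : ZMod 2)) + (N : ZMod 2) := by
        rw [Finset.sum_boole, hN]
    _ = (∑ k ∈ Finset.range (2 * m'), (k : ZMod 2)) + (N : ZMod 2) := by
        rw [← himg, Finset.sum_image hginj]
    _ = (((2 * m') * (2 * m' - 1) / 2 : ℕ) : ZMod 2) + (N : ZMod 2) := by
        rw [← Nat.cast_sum, Finset.sum_range_id]
    _ = ((N + (2 * m') * (2 * m' - 1) / 2 : ℕ) : ZMod 2) := by
        push_cast; ring
end

section
/- Let ι be the permutation of Fin 4 × Bool given by ι(i, b) = (i, ¬b), and let W₄ be the centralizer of ι in the permutation group of Fin 4 × Bool (so W₄ is the hyperoctahedral group of signed permutations of 4 letters, of order 384). Let H be the subgroup of W₄ consisting of those w ∈ W₄ that map the subset {0,1} × Bool onto itself (so H is a copy of W₂ × W₂, of order 64). Then for every group homomorphism ε from H to {±1} (the units of ℤ) and every w ∈ W₄, the integer ∑ ε(g⁻¹ w g), the sum taken over all g ∈ W₄ such that g⁻¹ w g ∈ H, is divisible by 2·|H| = 128. -/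
open scoped Pointwise Classical

/-- The fixed-point-free involution `(i, b) ↦ (i, ¬b)` of `Fin 4 × Bool`. -/
def iota : Equiv.Perm (Fin 4 × Bool) :=
  Equiv.prodCongr (Equiv.refl (Fin 4))
    ⟨fun b => !b, fun b => !b, fun b => Bool.not_not b, fun b => Bool.not_not b⟩

/-- The hyperoctahedral group `W₄`: the centralizer of `iota` in the
permutation group of `Fin 4 × Bool`. -/
def W4 : Subgroup (Equiv.Perm (Fin 4 × Bool)) := Subgroup.centralizer {iota}

/-- The subgroup `H ≅ W₂ × W₂` of `W₄` consisting of the elements of `W₄`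
mapping the subset `{0, 1} × Bool` onto itself. -/
def Hsub : Subgroup W4 :=
  Subgroup.comap W4.subtype
    (MulAction.stabilizer (Equiv.Perm (Fin 4 × Bool))
      ({p : Fin 4 × Bool | p.1 ∈ ({0, 1} : Set (Fin 4))} : Set (Fin 4 × Bool)))

/-!
The summand `f g = ε̇(g⁻¹ w g)` (with `ε̇` the extension of `ε` by zero) is constant on left
cosets `g H`, so the sum is `|H|` times a sum over `W₄ ⧸ H`. The element `τ` exchanging the
blocks `{0, 1} × Bool` and `{2, 3} × Bool` normalizes `H`, lies outside `H` and squares to `1`,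
so `g H ↦ g τ H` is a fixed-point-free involution of `W₄ ⧸ H`. Since `τ` normalizes `H`, the
summands at `g` and `g τ` are either both `0` or both `±1`; their sum is even, hence so is the
sum over `W₄ ⧸ H`. Finally `|H| = 64`, because `W₄` is the group of signed permutations.
-/

open Finset

theorem even_sum_of_involution {ι : Type*} [Fintype ι] (f : ι → ℤ) (σ : ι → ι)
    (hσσ : ∀ i, σ (σ i) = i) (hσ : ∀ i, σ i ≠ i) (hf : ∀ i, Even (f i + f (σ i))) :
    Even (∑ i, f i) := by
  rw [← ZMod.intCast_eq_zero_iff_even, Int.cast_sum]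
  refine sum_ninvolution σ (fun i => ?_) (fun i _ => hσ i) (fun i => mem_univ _) hσσ
  exact_mod_cast ZMod.intCast_eq_zero_iff_even.mpr (hf i)

theorem Int.even_units_add (u v : ℤˣ) : Even ((u : ℤ) + v) := by
  rcases Int.units_eq_one_or u with rfl | rfl <;>
    rcases Int.units_eq_one_or v with rfl | rfl <;> decide

namespace Subgroup

variable {G : Type*} [Group G] {H : Subgroup G}

theorem apply_out_mk {M : Type*} {f : G → M} (hf : ∀ g, ∀ h ∈ H, f (g * h) = f g) (g : G) :
    f (g : G ⧸ H).out = f g := by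
  obtain ⟨h, hh⟩ := QuotientGroup.mk_out_eq_mul H g
  rw [hh, hf g h h.2]

theorem sum_eq_card_nsmul_sum_quotient [Fintype G] {M : Type*} [AddCommMonoid M] (f : G → M)
    (hf : ∀ g, ∀ h ∈ H, f (g * h) = f g) :
    ∑ g, f g = Nat.card H • ∑ q : G ⧸ H, f q.out :=
  calc ∑ g, f g = ∑ g : G, f (g : G ⧸ H).out := by simp only [apply_out_mk hf]
    _ = ∑ q : G ⧸ H, ∑ _g : {g : G // (g : G ⧸ H) = q}, f q.out :=
      (Fintype.sum_fiberwise' _ (fun q : G ⧸ H => f q.out)).symm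
    _ = Nat.card H • ∑ q : G ⧸ H, f q.out := by
      rw [smul_sum]
      refine sum_congr rfl fun q _ => ?_
      have hfiber : Nat.card {g : G // (g : G ⧸ H) = q} = Nat.card H :=
        (QuotientGroup.card_preimage_mk H {q}).trans (by simp)
      rw [sum_const, card_univ, ← Nat.card_eq_fintype_card, hfiber]

theorem two_mul_card_dvd_sum [Fintype G] {t : G} (ht : t ∈ normalizer H) (htH : t ∉ H)
    (ht2 : t * t ∈ H) (f : G → ℤ) (hf : ∀ g, ∀ h ∈ H, f (g * h) = f g)
    (hpair : ∀ g, Even (f g + f (g * t))) :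
    (2 * Nat.card H : ℤ) ∣ ∑ g, f g := by
  let σ : G ⧸ H → G ⧸ H := fun q => (q.out * t : G)
  have hσσ : ∀ q, σ (σ q) = q := fun q => by
    obtain ⟨h, hh⟩ := QuotientGroup.mk_out_eq_mul H (q.out * t)
    have hconj : t * h * t⁻¹ ∈ H := (mem_normalizer_iff.mp ht h).mp h.2
    calc σ (σ q) = ((q.out * ((t * h * t⁻¹) * (t * t)) : G) : G ⧸ H) := by
          simp only [σ, hh]; group
      _ = q := by rw [QuotientGroup.mk_mul_of_mem _ (H.mul_mem hconj ht2), QuotientGroup.out_eq']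
  have hσ : ∀ q, σ q ≠ q := fun q hq => htH <| by
    simpa using QuotientGroup.eq.mp (hq.trans (QuotientGroup.out_eq' q).symm)
  obtain ⟨k, hk⟩ := even_sum_of_involution (fun q : G ⧸ H => f q.out) σ hσσ hσ
    fun q => by simpa only [σ, apply_out_mk hf] using hpair q.out
  rw [sum_eq_card_nsmul_sum_quotient f hf, hk, nsmul_eq_mul]
  exact ⟨k, by ring⟩

noncomputable def extendByZero (ε : H →* ℤˣ) (x : G) : ℤ :=
  if hx : x ∈ H then ((ε ⟨x, hx⟩ : ℤˣ) : ℤ) else 0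

theorem extendByZero_conj (ε : H →* ℤˣ) (x : G) {h : G} (hh : h ∈ H) :
    extendByZero ε (h⁻¹ * x * h) = extendByZero ε x := by
  have hmem : h⁻¹ * x * h ∈ H ↔ x ∈ H := ((mem_normalizer_iff''.mp (le_normalizer hh)) x).symm
  by_cases hx : x ∈ H
  · have hconj : (⟨h⁻¹ * x * h, hmem.mpr hx⟩ : H) = ⟨h, hh⟩⁻¹ * ⟨x, hx⟩ * ⟨h, hh⟩ := rfl
    rw [extendByZero, extendByZero, dif_pos (hmem.mpr hx), dif_pos hx, hconj, map_mul, map_mul,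
      map_inv, inv_mul_cancel_comm]
  · rw [extendByZero, extendByZero, dif_neg (mt hmem.mp hx), dif_neg hx]

theorem even_extendByZero_add_conj (ε : H →* ℤˣ) (x : G) {t : G} (ht : t ∈ normalizer H) :
    Even (extendByZero ε x + extendByZero ε (t⁻¹ * x * t)) := by
  have hmem : x ∈ H ↔ t⁻¹ * x * t ∈ H := mem_normalizer_iff''.mp ht x
  by_cases hx : x ∈ H
  · rw [extendByZero, extendByZero, dif_pos hx, dif_pos (hmem.mp hx)]
    exact Int.even_units_add _ _
  · rw [extendByZero, extendByZero, dif_neg hx, dif_neg (mt hmem.mpr hx)]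
    simp

theorem two_mul_card_dvd_sum_extendByZero_conj [Fintype G] (ε : H →* ℤˣ) (w : G) {t : G}
    (ht : t ∈ normalizer H) (htH : t ∉ H) (ht2 : t * t ∈ H) :
    (2 * Nat.card H : ℤ) ∣ ∑ g, extendByZero ε (g⁻¹ * w * g) := by
  refine two_mul_card_dvd_sum ht htH ht2 _ (fun g h hh => ?_) fun g => ?_
  · rw [show (g * h)⁻¹ * w * (g * h) = h⁻¹ * (g⁻¹ * w * g) * h by group]
    exact extendByZero_conj ε _ hh
  · rw [show (g * t)⁻¹ * w * (g * t) = t⁻¹ * (g⁻¹ * w * g) * t by group]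
    exact even_extendByZero_add_conj ε _ ht

end Subgroup

open Equiv MulAction Subgroup

namespace Equiv.Perm

variable {α : Type*}

def boolFlip (α : Type*) : Perm (α × Bool) := prodCongr (Equiv.refl α) boolNot

def signed (π : Perm α) (s : α → Bool) : Perm (α × Bool) where
  toFun p := (π p.1, xor p.2 (s p.1))
  invFun p := (π.symm p.1, xor p.2 (s (π.symm p.1)))
  left_inv p := by simp
  right_inv p := by simp

theorem signed_mem_centralizer (π : Perm α) (s : α → Bool) :
    signed π s ∈ centralizer {boolFlip α} := by
  rw [mem_centralizer_singleton_iff]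
  ext ⟨i, b⟩ <;> simp [signed, boolFlip]

theorem apply_eq_of_mem_centralizer {g : Perm (α × Bool)} (hg : g ∈ centralizer {boolFlip α})
    (i : α) (b : Bool) : g (i, b) = ((g (i, false)).1, xor b (g (i, false)).2) := by
  cases b
  · simp
  · have := congrArg (· (i, false)) (mem_centralizer_singleton_iff.mp hg)
    simpa [boolFlip, Prod.map] using this

theorem fst_apply_eq_of_mem_centralizer {g : Perm (α × Bool)}
    (hg : g ∈ centralizer {boolFlip α}) (i : α) (b c : Bool) : (g (i, b)).1 = (g (i, c)).1 := by
  rw [apply_eq_of_mem_centralizer hg i b, apply_eq_of_mem_centralizer hg i c]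

def basePerm (g : centralizer {boolFlip α}) : Perm α where
  toFun i := ((g : Perm (α × Bool)) (i, false)).1
  invFun i := (((g⁻¹ : centralizer {boolFlip α}) : Perm (α × Bool)) (i, false)).1
  left_inv i := by
    dsimp only
    rw [fst_apply_eq_of_mem_centralizer (g⁻¹).2 _ false ((g : Perm (α × Bool)) (i, false)).2]
    simp
  right_inv i := by
    dsimp only
    rw [fst_apply_eq_of_mem_centralizer g.2 _ false
      (((g⁻¹ : centralizer {boolFlip α}) : Perm (α × Bool)) (i, false)).2]
    simp

def signedEquiv : Perm α × (α → Bool) ≃ centralizer {boolFlip α} where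
  toFun x := ⟨signed x.1 x.2, signed_mem_centralizer x.1 x.2⟩
  invFun g := (basePerm g, fun i => ((g : Perm (α × Bool)) (i, false)).2)
  left_inv x := by ext <;> simp [signed, basePerm]
  right_inv g := Subtype.ext <| Equiv.ext fun p => (apply_eq_of_mem_centralizer g.2 p.1 p.2).symm

end Equiv.Perm

open Equiv.Perm

theorem mem_Hsub_iff (x : W4) :
    x ∈ Hsub ↔ ∀ p : Fin 4 × Bool,
      ((x : Perm (Fin 4 × Bool)) p).1 ∈ ({0, 1} : Set (Fin 4)) ↔ p.1 ∈ ({0, 1} : Set (Fin 4)) :=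
  mem_stabilizer_set

-- `iota` is `boolFlip (Fin 4)` by definition, so `W4` is the centralizer of `boolFlip (Fin 4)`.
def signedEquivW4 : Perm (Fin 4) × (Fin 4 → Bool) ≃ W4 := signedEquiv

theorem signedEquivW4_mem_Hsub_iff (x : Perm (Fin 4) × (Fin 4 → Bool)) :
    signedEquivW4 x ∈ Hsub ↔ x.1 ∈ stabilizer (Perm (Fin 4)) ({0, 1} : Set (Fin 4)) := by
  rw [mem_Hsub_iff, mem_stabilizer_set]
  exact ⟨fun h i => h (i, false), fun h p => h p.1⟩

theorem card_stabilizer_pair : Nat.card (stabilizer (Perm (Fin 4)) ({0, 1} : Set (Fin 4))) = 4 :=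
  calc _ = Nat.card {π : Perm (Fin 4) // ∀ i, (π i = 0 ∨ π i = 1) ↔ (i = 0 ∨ i = 1)} :=
        Nat.card_congr <| Equiv.subtypeEquivRight fun π => by rw [mem_stabilizer_set]; simp
    _ = 4 := by rw [Nat.card_eq_fintype_card]; decide

theorem card_Hsub : Nat.card Hsub = 64 :=
  calc Nat.card Hsub
      = Nat.card {x : Perm (Fin 4) × (Fin 4 → Bool) //
          x.1 ∈ stabilizer (Perm (Fin 4)) ({0, 1} : Set (Fin 4))} :=
        (Nat.card_congr <|
          signedEquivW4.subtypeEquiv fun x => (signedEquivW4_mem_Hsub_iff x).symm).symm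
    _ = Nat.card (stabilizer (Perm (Fin 4)) ({0, 1} : Set (Fin 4)) × (Fin 4 → Bool)) :=
        Nat.card_congr Equiv.prodSubtypeFstEquivSubtypeProd
    _ = 64 := by rw [Nat.card_prod, card_stabilizer_pair]; simp

def blockSwap : W4 := ⟨signed (swap 0 2 * swap 1 3) fun _ => false, signed_mem_centralizer _ _⟩

theorem blockSwap_mul_self : blockSwap * blockSwap = 1 :=
  Subtype.ext <| Equiv.ext <| by decide

theorem blockSwap_apply_mem_iff (p : Fin 4 × Bool) :
    ((blockSwap : Perm (Fin 4 × Bool)) p).1 ∈ ({0, 1} : Set (Fin 4)) ↔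
      p.1 ∉ ({0, 1} : Set (Fin 4)) := by
  simp only [Set.mem_insert_iff, Set.mem_singleton_iff]
  revert p
  decide

theorem blockSwap_not_mem_Hsub : blockSwap ∉ Hsub := fun h => by
  simpa using ((mem_Hsub_iff _).mp h (0, false)).symm.trans (blockSwap_apply_mem_iff (0, false))

theorem blockSwap_mem_normalizer : blockSwap ∈ normalizer (Hsub : Set W4) := by
  refine mem_normalizer_fintype fun h hh => (mem_Hsub_iff _).mpr fun p => ?_
  simp only [inv_eq_of_mul_eq_one_right blockSwap_mul_self, Subgroup.coe_mul, Perm.mul_apply]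
  rw [blockSwap_apply_mem_iff, (mem_Hsub_iff h).mp hh, blockSwap_apply_mem_iff, not_not]

/-- Lemma 2.17(i) of the paper: for every character `ε : H → {±1}` and every
`w ∈ W₄`, the sum `∑_{g ∈ W₄, g⁻¹wg ∈ H} ε(g⁻¹wg)` is divisible by
`2 * |H| = 128`; equivalently, the induced character
`tr(w, Ind_{W₂×W₂}^{W₄}(ε))` is an even integer. -/
theorem stmt_9 (ε : Hsub →* ℤˣ) (w : W4) :
    (128 : ℤ) ∣ ∑ g : W4,
      if hg : g⁻¹ * w * g ∈ Hsub then ((ε ⟨g⁻¹ * w * g, hg⟩ : ℤˣ) : ℤ) else 0 := by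
  have h := two_mul_card_dvd_sum_extendByZero_conj ε w blockSwap_mem_normalizer
    blockSwap_not_mem_Hsub (blockSwap_mul_self ▸ Hsub.one_mem)
  rwa [card_Hsub] at h
end
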